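/- Fix μ ∈ ℝ. On the open set U = { (ξ, η, p_ξ, p_η) ∈ ℝ⁴ : ξ² ≠ η² } define H(ξ, η, p_ξ, p_η) = (2(ξ²−1)p_ξ² − 2ξ + 2(1−η²)p_η² + 2(1−2μ)η)/(ξ²−η²) and G(ξ, η, p_ξ, p_η) = −(η²(2(ξ²−1)p_ξ² − 2ξ) + ξ²(2(1−η²)p_η² + 2(1−2μ)η))/(ξ²−η²). Then at every point of U the canonical Poisson bracket vanishes: (∂G/∂ξ)(∂H/∂p_ξ) − (∂G/∂p_ξ)(∂H/∂ξ) + (∂G/∂η)(∂H/∂p_η) − (∂G/∂p_η)(∂H/∂η) = 0. That is, G is a first integral of the Euler problem. -/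
import Mathlib


/-- The Hamiltonian of the Euler problem in elliptic coordinates. -/
noncomputable def eulerH (μ ξ η pξ pη : ℝ) : ℝ :=
  (2 * (ξ ^ 2 - 1) * pξ ^ 2 - 2 * ξ + (2 * (1 - η ^ 2) * pη ^ 2 + 2 * (1 - 2 * μ) * η)) /
    (ξ ^ 2 - η ^ 2)

/-- The Strand–Reinhardt first integral of the Euler problem. -/
noncomputable def eulerG (μ ξ η pξ pη : ℝ) : ℝ :=
  -(η ^ 2 * (2 * (ξ ^ 2 - 1) * pξ ^ 2 - 2 * ξ) +
      ξ ^ 2 * (2 * (1 - η ^ 2) * pη ^ 2 + 2 * (1 - 2 * μ) * η)) /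
    (ξ ^ 2 - η ^ 2)

private theorem HasDerivAt.congr_d {f : ℝ → ℝ} {d d' x : ℝ} (h : HasDerivAt f d x)
    (hd : d' = d) : HasDerivAt f d' x := hd ▸ h

/-- On the open set where ξ² ≠ η², the canonical Poisson bracket of G and H vanishes:
{G, H} = G_ξ H_{p_ξ} - G_{p_ξ} H_ξ + G_η H_{p_η} - G_{p_η} H_η = 0, i.e. G is a
first integral of the Euler problem. -/
theorem euler_poisson_bracket_vanishes (μ ξ η pξ pη : ℝ) (hne : ξ ^ 2 ≠ η ^ 2) :
    deriv (fun x => eulerG μ x η pξ pη) ξ * deriv (fun y => eulerH μ ξ η y pη) pξ -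
      deriv (fun y => eulerG μ ξ η y pη) pξ * deriv (fun x => eulerH μ x η pξ pη) ξ +
      deriv (fun x => eulerG μ ξ x pξ pη) η * deriv (fun y => eulerH μ ξ η pξ y) pη -
      deriv (fun y => eulerG μ ξ η pξ y) pη * deriv (fun x => eulerH μ ξ x pξ pη) η = 0 := by
  have h0 : ξ ^ 2 - η ^ 2 ≠ 0 := sub_ne_zero.mpr hne
  have hsq : ∀ t : ℝ, HasDerivAt (fun x : ℝ => x ^ 2) (2 * t) t := fun t => by
    simpa using hasDerivAt_pow 2 t
  -- ∂H/∂ξ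
  have hHx : HasDerivAt (fun x => eulerH μ x η pξ pη)
      (((2 * (2 * ξ) * pξ ^ 2 - 2) * (ξ ^ 2 - η ^ 2) -
          (2 * (ξ ^ 2 - 1) * pξ ^ 2 - 2 * ξ + (2 * (1 - η ^ 2) * pη ^ 2 + 2 * (1 - 2 * μ) * η)) *
            (2 * ξ)) / (ξ ^ 2 - η ^ 2) ^ 2) ξ := by
    have hnum : HasDerivAt
        (fun x : ℝ => 2 * (x ^ 2 - 1) * pξ ^ 2 - 2 * x +
          (2 * (1 - η ^ 2) * pη ^ 2 + 2 * (1 - 2 * μ) * η))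
        (2 * (2 * ξ) * pξ ^ 2 - 2) ξ :=
      ((((((hsq ξ).sub_const 1).const_mul 2).mul_const (pξ ^ 2)).sub
        ((hasDerivAt_id ξ).const_mul 2)).add_const _).congr_d (by ring)
    have hden : HasDerivAt (fun x : ℝ => x ^ 2 - η ^ 2) (2 * ξ) ξ := (hsq ξ).sub_const _
    exact ((hnum.div hden h0).congr_d (by ring))
  -- ∂H/∂pξ
  have hHpx : HasDerivAt (fun y => eulerH μ ξ η y pη)
      ((2 * (ξ ^ 2 - 1) * (2 * pξ)) / (ξ ^ 2 - η ^ 2)) pξ := by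
    have hnum : HasDerivAt
        (fun y : ℝ => 2 * (ξ ^ 2 - 1) * y ^ 2 - 2 * ξ +
          (2 * (1 - η ^ 2) * pη ^ 2 + 2 * (1 - 2 * μ) * η))
        (2 * (ξ ^ 2 - 1) * (2 * pξ)) pξ :=
      ((((hsq pξ).const_mul (2 * (ξ ^ 2 - 1))).sub_const (2 * ξ)).add_const _).congr_d (by ring)
    exact hnum.div_const _
  -- ∂H/∂η
  have hHy : HasDerivAt (fun x => eulerH μ ξ x pξ pη)
      (((2 * (-(2 * η)) * pη ^ 2 + 2 * (1 - 2 * μ)) * (ξ ^ 2 - η ^ 2) -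
          (2 * (ξ ^ 2 - 1) * pξ ^ 2 - 2 * ξ + (2 * (1 - η ^ 2) * pη ^ 2 + 2 * (1 - 2 * μ) * η)) *
            (-(2 * η))) / (ξ ^ 2 - η ^ 2) ^ 2) η := by
    have hnum : HasDerivAt
        (fun x : ℝ => 2 * (ξ ^ 2 - 1) * pξ ^ 2 - 2 * ξ +
          (2 * (1 - x ^ 2) * pη ^ 2 + 2 * (1 - 2 * μ) * x))
        (2 * (-(2 * η)) * pη ^ 2 + 2 * (1 - 2 * μ)) η :=
      (((((hsq η).const_sub 1).const_mul 2).mul_const (pη ^ 2)).add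
        ((hasDerivAt_id η).const_mul (2 * (1 - 2 * μ))) |>.const_add _).congr_d (by ring)
    have hden : HasDerivAt (fun x : ℝ => ξ ^ 2 - x ^ 2) (-(2 * η)) η := (hsq η).const_sub _
    exact ((hnum.div hden h0).congr_d (by ring))
  -- ∂H/∂pη
  have hHpy : HasDerivAt (fun y => eulerH μ ξ η pξ y)
      ((2 * (1 - η ^ 2) * (2 * pη)) / (ξ ^ 2 - η ^ 2)) pη := by
    have hnum : HasDerivAt
        (fun y : ℝ => 2 * (ξ ^ 2 - 1) * pξ ^ 2 - 2 * ξ +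
          (2 * (1 - η ^ 2) * y ^ 2 + 2 * (1 - 2 * μ) * η))
        (2 * (1 - η ^ 2) * (2 * pη)) pη :=
      ((((hsq pη).const_mul (2 * (1 - η ^ 2))).add_const (2 * (1 - 2 * μ) * η)).const_add
        (2 * (ξ ^ 2 - 1) * pξ ^ 2 - 2 * ξ)).congr_d (by ring)
    exact hnum.div_const _
  -- ∂G/∂ξ
  have hGx : HasDerivAt (fun x => eulerG μ x η pξ pη)
      (((-(η ^ 2 * (2 * (2 * ξ) * pξ ^ 2 - 2) +
            2 * ξ * (2 * (1 - η ^ 2) * pη ^ 2 + 2 * (1 - 2 * μ) * η))) * (ξ ^ 2 - η ^ 2) -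
          (-(η ^ 2 * (2 * (ξ ^ 2 - 1) * pξ ^ 2 - 2 * ξ) +
            ξ ^ 2 * (2 * (1 - η ^ 2) * pη ^ 2 + 2 * (1 - 2 * μ) * η))) * (2 * ξ)) /
        (ξ ^ 2 - η ^ 2) ^ 2) ξ := by
    have hin : HasDerivAt (fun x : ℝ => 2 * (x ^ 2 - 1) * pξ ^ 2 - 2 * x)
        (2 * (2 * ξ) * pξ ^ 2 - 2) ξ :=
      (((((hsq ξ).sub_const 1).const_mul 2).mul_const (pξ ^ 2)).sub
        ((hasDerivAt_id ξ).const_mul 2)).congr_d (by ring)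
    have hnum : HasDerivAt
        (fun x : ℝ => -(η ^ 2 * (2 * (x ^ 2 - 1) * pξ ^ 2 - 2 * x) +
          x ^ 2 * (2 * (1 - η ^ 2) * pη ^ 2 + 2 * (1 - 2 * μ) * η)))
        (-(η ^ 2 * (2 * (2 * ξ) * pξ ^ 2 - 2) +
          2 * ξ * (2 * (1 - η ^ 2) * pη ^ 2 + 2 * (1 - 2 * μ) * η))) ξ :=
      (((hin.const_mul (η ^ 2)).add ((hsq ξ).mul_const _)).neg).congr_d (by ring)
    have hden : HasDerivAt (fun x : ℝ => x ^ 2 - η ^ 2) (2 * ξ) ξ := (hsq ξ).sub_const _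
    exact ((hnum.div hden h0).congr_d (by ring))
  -- ∂G/∂pξ
  have hGpx : HasDerivAt (fun y => eulerG μ ξ η y pη)
      ((-(η ^ 2 * (2 * (ξ ^ 2 - 1) * (2 * pξ)))) / (ξ ^ 2 - η ^ 2)) pξ := by
    have hin : HasDerivAt (fun y : ℝ => 2 * (ξ ^ 2 - 1) * y ^ 2 - 2 * ξ)
        (2 * (ξ ^ 2 - 1) * (2 * pξ)) pξ :=
      (((hsq pξ).const_mul (2 * (ξ ^ 2 - 1))).sub_const (2 * ξ)).congr_d (by ring)
    have hnum : HasDerivAt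
        (fun y : ℝ => -(η ^ 2 * (2 * (ξ ^ 2 - 1) * y ^ 2 - 2 * ξ) +
          ξ ^ 2 * (2 * (1 - η ^ 2) * pη ^ 2 + 2 * (1 - 2 * μ) * η)))
        (-(η ^ 2 * (2 * (ξ ^ 2 - 1) * (2 * pξ)))) pξ :=
      (((hin.const_mul (η ^ 2)).add_const _).neg).congr_d (by ring)
    exact hnum.div_const _
  -- ∂G/∂η
  have hGy : HasDerivAt (fun x => eulerG μ ξ x pξ pη)
      (((-(2 * η * (2 * (ξ ^ 2 - 1) * pξ ^ 2 - 2 * ξ) +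
            ξ ^ 2 * (2 * (-(2 * η)) * pη ^ 2 + 2 * (1 - 2 * μ)))) * (ξ ^ 2 - η ^ 2) -
          (-(η ^ 2 * (2 * (ξ ^ 2 - 1) * pξ ^ 2 - 2 * ξ) +
            ξ ^ 2 * (2 * (1 - η ^ 2) * pη ^ 2 + 2 * (1 - 2 * μ) * η))) * (-(2 * η))) /
        (ξ ^ 2 - η ^ 2) ^ 2) η := by
    have hin : HasDerivAt (fun x : ℝ => 2 * (1 - x ^ 2) * pη ^ 2 + 2 * (1 - 2 * μ) * x)
        (2 * (-(2 * η)) * pη ^ 2 + 2 * (1 - 2 * μ)) η :=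
      ((((((hsq η).const_sub 1).const_mul 2).mul_const (pη ^ 2))).add
        ((hasDerivAt_id η).const_mul (2 * (1 - 2 * μ)))).congr_d (by ring)
    have hnum : HasDerivAt
        (fun x : ℝ => -(x ^ 2 * (2 * (ξ ^ 2 - 1) * pξ ^ 2 - 2 * ξ) +
          ξ ^ 2 * (2 * (1 - x ^ 2) * pη ^ 2 + 2 * (1 - 2 * μ) * x)))
        (-(2 * η * (2 * (ξ ^ 2 - 1) * pξ ^ 2 - 2 * ξ) +
          ξ ^ 2 * (2 * (-(2 * η)) * pη ^ 2 + 2 * (1 - 2 * μ)))) η :=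
      ((((hsq η).mul_const _).add (hin.const_mul (ξ ^ 2))).neg).congr_d (by ring)
    have hden : HasDerivAt (fun x : ℝ => ξ ^ 2 - x ^ 2) (-(2 * η)) η := (hsq η).const_sub _
    exact ((hnum.div hden h0).congr_d (by ring))
  -- ∂G/∂pη
  have hGpy : HasDerivAt (fun y => eulerG μ ξ η pξ y)
      ((-(ξ ^ 2 * (2 * (1 - η ^ 2) * (2 * pη)))) / (ξ ^ 2 - η ^ 2)) pη := by
    have hin : HasDerivAt (fun y : ℝ => 2 * (1 - η ^ 2) * y ^ 2 + 2 * (1 - 2 * μ) * η)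
        (2 * (1 - η ^ 2) * (2 * pη)) pη :=
      (((hsq pη).const_mul (2 * (1 - η ^ 2))).add_const _).congr_d (by ring)
    have hnum : HasDerivAt
        (fun y : ℝ => -(η ^ 2 * (2 * (ξ ^ 2 - 1) * pξ ^ 2 - 2 * ξ) +
          ξ ^ 2 * (2 * (1 - η ^ 2) * y ^ 2 + 2 * (1 - 2 * μ) * η)))
        (-(ξ ^ 2 * (2 * (1 - η ^ 2) * (2 * pη)))) pη :=
      (((hin.const_mul (ξ ^ 2)).const_add (η ^ 2 * (2 * (ξ ^ 2 - 1) * pξ ^ 2 - 2 * ξ))).neg).congr_d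
        (by ring)
    exact hnum.div_const _
  rw [hGx.deriv, hHpx.deriv, hGpx.deriv, hHx.deriv, hGy.deriv, hHpy.deriv, hGpy.deriv, hHy.deriv]
  field_simp
  ring
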